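/- For i.i.d. random variables X₁,…,Xₙ with common subexponential distribution F, and constants 0 < a ≤ b < ∞, the relation P(Σ_{i=1}^n cᵢXᵢ > x) ∼ Σ_{i=1}^n P(cᵢXᵢ > x) as x → ∞ holds uniformly for (c₁,…,cₙ) ∈ [a,b]ⁿ. -/

import Mathlib

/-!
Upper bound, by induction on the number of summands. Split the sum as `U + V` with
`V = c_j X_j` independent of `U`; then
`{U + V > x} ⊆ {V > x - h} ∪ {U > x - h} ∪ {U + V > x, h < V ≤ x - h}`.
The first two events cost a factor `1 + ε` each, by the induction hypothesis and
long-tailedness `F̄(x - h) ∼ F̄(x)` (uniform in the weights because `x / c ≥ x / b`).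
Conditioning on `V`, the third is bounded by integrals
`∫_{h/c_j}^{(x-h)/c_j} F̄((x - c_j t) / c_i) F(dt)`, which are `o(F̄(x / c_i) + F̄(x / c_j))`:
subexponentiality says exactly that `∫_0^x F̄(x - u) F(du) ∼ F̄(x)`, which forces both
long-tailedness and `∫_H^{x-H} F̄(x - u) F(du) = o(F̄(x))` as `H → ∞`.

Lower bound: the `X_i` are positive, so the sum exceeds `x` as soon as one `c_i X_i` does, and by
independence `P(max c_i X_i > x) = 1 - ∏ (1 - p_i) ≥ ∑ p_i - (∑ p_i)²`, with `∑ p_i → 0`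
uniformly.
-/

open MeasureTheory Filter ProbabilityTheory

/-- The tail `1 - F(x)` of a distribution `μ` on `ℝ`. -/
noncomputable def mtail (μ : Measure ℝ) (x : ℝ) : ℝ := (μ (Set.Ioi x)).toReal

/-- The convolution of `μ` and `ν`. -/
noncomputable def mconv (μ ν : Measure ℝ) : Measure ℝ :=
  (μ.prod ν).map (fun p => p.1 + p.2)

/-- `μ` is subexponential: supported in `(0,∞)`, positive tail, and
`(1 - F^{*2}(x))/(1 - F(x)) → 2`. -/
def Subexp (μ : Measure ℝ) : Prop :=
  μ (Set.Iic 0) = 0 ∧ (∀ x, 0 < mtail μ x) ∧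
  Tendsto (fun x => mtail (mconv μ μ) x / mtail μ x) atTop (nhds 2)

open Set
open scoped ENNReal

lemma div_max_sub_le_sub_mul_div {c d t x : ℝ} (hc : 0 < c) (ht : 0 ≤ t)
    (hdt : d * t ≤ x) : x / max c d - t ≤ (x - d * t) / c := by
  have hM : 0 < max c d := hc.trans_le (le_max_left c d)
  calc x / max c d - t ≤ x / max c d - d * t / max c d := by
        gcongr
        rw [div_le_iff₀ hM, mul_comm t]
        exact mul_le_mul_of_nonneg_right (le_max_right c d) ht
    _ = (x - d * t) / max c d := by ring
    _ ≤ (x - d * t) / c := div_le_div_of_nonneg_left (by linarith) hc (le_max_left c d)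

lemma ae_pos_of_measure_Iic_eq_zero {μ : Measure ℝ} (h0 : μ (Iic 0) = 0) : ∀ᵐ u ∂μ, 0 < u :=
  ae_iff.mpr (by simpa [← Iic_def] using h0)

section Tail

variable (μ : Measure ℝ)

lemma antitone_measure_Ioi : Antitone fun x => μ (Ioi x) :=
  fun _ _ h => measure_mono (Ioi_subset_Ioi h)

lemma measurable_measure_Ioi_sub (x : ℝ) : Measurable fun u => μ (Ioi (x - u)) :=
  Monotone.measurable fun _ _ huv => antitone_measure_Ioi μ (by linarith)

lemma measure_Ioi_eq_ofReal_mtail [IsFiniteMeasure μ] (x : ℝ) :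
    μ (Ioi x) = ENNReal.ofReal (mtail μ x) :=
  (ENNReal.ofReal_toReal (measure_ne_top μ _)).symm

lemma lintegral_measure_Ioi_sub_ne_top [IsFiniteMeasure μ] (s : Set ℝ) (x : ℝ) :
    ∫⁻ u in s, μ (Ioi (x - u)) ∂μ ≠ ⊤ := by
  refine ne_top_of_le_ne_top (b := ∫⁻ _ in s, μ univ ∂μ) ?_
    (lintegral_mono fun _ => measure_mono (subset_univ _))
  simp [ENNReal.mul_eq_top]

lemma mconv_Ioi (ν : Measure ℝ) [SFinite ν] (x : ℝ) :
    mconv μ ν (Ioi x) = ∫⁻ u, ν (Ioi (x - u)) ∂μ := by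
  have hmeas : MeasurableSet {p : ℝ × ℝ | x < p.1 + p.2} :=
    measurableSet_lt measurable_const (measurable_fst.add measurable_snd)
  rw [mconv, Measure.map_apply (by fun_prop) measurableSet_Ioi]
  refine (Measure.prod_apply hmeas).trans (lintegral_congr fun u => ?_)
  congr 1
  ext v
  simp [sub_lt_iff_lt_add']

lemma toReal_measure_Ioc [IsFiniteMeasure μ] {a b : ℝ} (hab : a ≤ b) :
    (μ (Ioc a b)).toReal = mtail μ a - mtail μ b := by
  have : μ (Ioc a b) + μ (Ioi b) = μ (Ioi a) := by
    rw [← measure_union Ioc_disjoint_Ioi_same measurableSet_Ioi, Ioc_union_Ioi_eq_Ioi hab]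
  rw [mtail, mtail, ← this, ENNReal.toReal_add (measure_ne_top μ _) (measure_ne_top μ _)]
  ring

lemma mul_le_lintegral_measure_Ioi_sub {s : Set ℝ} {x H : ℝ} (hs : ∀ u ∈ s, H ≤ u) :
    μ (Ioi (x - H)) * μ s ≤ ∫⁻ u in s, μ (Ioi (x - u)) ∂μ := by
  rw [← setLIntegral_const]
  exact setLIntegral_mono (measurable_measure_Ioi_sub μ x)
    fun u hu => antitone_measure_Ioi μ (by linarith [hs u hu])

lemma measure_Ioi_div_max_le (x c d : ℝ) :
    μ (Ioi (x / max c d)) ≤ μ (Ioi (x / c)) + μ (Ioi (x / d)) := by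
  rcases max_choice c d with h | h <;> rw [h]
  exacts [le_self_add, le_add_self]

variable [IsProbabilityMeasure μ]

lemma toReal_measure_Iic (x : ℝ) : (μ (Iic x)).toReal = 1 - mtail μ x := by
  rw [mtail, ← compl_Iic, prob_compl_eq_one_sub measurableSet_Iic,
    ENNReal.toReal_sub_of_le prob_le_one ENNReal.one_ne_top, ENNReal.toReal_one]
  ring

lemma tendsto_mtail_atTop : Tendsto (mtail μ) atTop (nhds 0) := by
  have h : mtail μ = fun x => 1 - cdf μ x := funext fun x => by
    rw [cdf_eq_real, measureReal_def, toReal_measure_Iic]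
    ring
  rw [h]
  simpa using (tendsto_cdf_atTop μ).const_sub 1

variable {μ} (h0 : μ (Iic 0) = 0)
include h0

lemma measure_Ioi_of_nonpos {z : ℝ} (hz : z ≤ 0) : μ (Ioi z) = 1 := by
  refine le_antisymm prob_le_one ?_
  calc 1 = μ (Iic 0)ᶜ := by rw [prob_compl_eq_one_sub measurableSet_Iic, h0, tsub_zero]
    _ ≤ μ (Ioi z) := measure_mono (by rw [compl_Iic]; exact Ioi_subset_Ioi hz)

lemma mtail_mul_add_le {H x : ℝ} (hH : 0 ≤ H) (hHx : H ≤ x) :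
    mtail μ x * (1 - mtail μ H) + (∫⁻ u in Ioc H x, μ (Ioi (x - u)) ∂μ).toReal
      ≤ (∫⁻ u in Ioc 0 x, μ (Ioi (x - u)) ∂μ).toReal := by
  have hsplit : μ (Ioi x) * μ (Ioc 0 H) + ∫⁻ u in Ioc H x, μ (Ioi (x - u)) ∂μ
      ≤ ∫⁻ u in Ioc 0 x, μ (Ioi (x - u)) ∂μ := by
    rw [← Ioc_union_Ioc_eq_Ioc hH hHx,
      lintegral_union measurableSet_Ioc (Ioc_disjoint_Ioc_of_le le_rfl)]
    gcongr
    simpa using mul_le_lintegral_measure_Ioi_sub μ (s := Ioc 0 H) (x := x) fun u hu => le_of_lt hu.1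
  have hI := ENNReal.toReal_mono (lintegral_measure_Ioi_sub_ne_top μ _ x) hsplit
  rwa [ENNReal.toReal_add (by finiteness) (lintegral_measure_Ioi_sub_ne_top μ _ x),
    ENNReal.toReal_mul, toReal_measure_Ioc μ hH, mtail, measure_Ioi_of_nonpos h0 le_rfl,
    ENNReal.toReal_one] at hI

lemma mconv_self_Ioi {x : ℝ} (hx : 0 ≤ x) :
    mconv μ μ (Ioi x) = μ (Ioi x) + ∫⁻ u in Ioc 0 x, μ (Ioi (x - u)) ∂μ := by
  have hpos : ∫⁻ u, μ (Ioi (x - u)) ∂μ = ∫⁻ u in Ioi 0, μ (Ioi (x - u)) ∂μ := by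
    rw [Measure.restrict_eq_self_of_ae_mem (s := Ioi 0) (ae_pos_of_measure_Iic_eq_zero h0)]
  rw [mconv_Ioi, hpos, ← Ioc_union_Ioi_eq_Ioi hx,
    lintegral_union measurableSet_Ioi Ioc_disjoint_Ioi_same, add_comm]
  congr 1
  rw [setLIntegral_congr_fun measurableSet_Ioi
    fun u hu => measure_Ioi_of_nonpos h0 (by linarith [mem_Ioi.mp hu])]
  simp

end Tail

namespace Subexp

variable {μ : Measure ℝ} [IsProbabilityMeasure μ] (hsub : Subexp μ)
include hsub

lemma tendsto_lintegral_div_mtail :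
    Tendsto (fun x => (∫⁻ u in Ioc 0 x, μ (Ioi (x - u)) ∂μ).toReal / mtail μ x) atTop
      (nhds 1) := by
  have hconv : ∀ᶠ x in atTop, mtail (mconv μ μ) x / mtail μ x - 1
      = (∫⁻ u in Ioc 0 x, μ (Ioi (x - u)) ∂μ).toReal / mtail μ x := by
    filter_upwards [eventually_ge_atTop 0] with x hx
    have hm : (μ (Ioi x)).toReal ≠ 0 := (hsub.2.1 x).ne'
    simp only [mtail]
    rw [mconv_self_Ioi hsub.1 hx, ENNReal.toReal_add (measure_ne_top μ _)
      (lintegral_measure_Ioi_sub_ne_top μ _ x), add_div, div_self hm, add_sub_cancel_left]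
  have := hsub.2.2.sub_const 1
  norm_num at this
  exact this.congr' hconv

lemma tendsto_mtail_sub_div_mtail {H : ℝ} (hH : 0 ≤ H) :
    Tendsto (fun x => mtail μ (x - H) / mtail μ x) atTop (nhds 1) := by
  set φ := mtail μ H
  have hφ : 0 < φ := hsub.2.1 H
  set I := fun x => (∫⁻ u in Ioc 0 x, μ (Ioi (x - u)) ∂μ).toReal
  have hlim : Tendsto (fun x => (I x / mtail μ x - (1 - φ)) / (φ - mtail μ x)) atTop
      (nhds 1) := by
    have h := ((hsub.tendsto_lintegral_div_mtail).sub_const (1 - φ)).div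
      ((tendsto_mtail_atTop μ).const_sub φ) (by simpa using hφ.ne')
    rwa [sub_sub_cancel, sub_zero, div_self hφ.ne'] at h
  refine tendsto_of_tendsto_of_tendsto_of_le_of_le' tendsto_const_nhds hlim ?_ ?_
  · filter_upwards with x
    rw [one_le_div (hsub.2.1 x)]
    exact ENNReal.toReal_mono (measure_ne_top μ _) (antitone_measure_Ioi μ (by linarith))
  · filter_upwards [eventually_ge_atTop H,
      (tendsto_mtail_atTop μ).eventually (eventually_lt_nhds hφ)] with x hHx hxφ
    have hm := hsub.2.1 x
    have hJ : mtail μ (x - H) * (φ - mtail μ x)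
        ≤ (∫⁻ u in Ioc H x, μ (Ioi (x - u)) ∂μ).toReal := by
      have := ENNReal.toReal_mono (lintegral_measure_Ioi_sub_ne_top μ _ x)
        (mul_le_lintegral_measure_Ioi_sub μ (s := Ioc H x) (x := x) fun u hu => le_of_lt hu.1)
      rwa [ENNReal.toReal_mul, toReal_measure_Ioc μ hHx] at this
    have hI := mtail_mul_add_le hsub.1 hH hHx
    rw [le_div_iff₀ (by linarith), div_mul_eq_mul_div, le_sub_iff_add_le, div_add' _ _ _ hm.ne',
      div_le_div_iff_of_pos_right hm]
    nlinarith

lemma eventually_measure_Ioi_sub_le {H : ℝ} (hH : 0 ≤ H) {ε : ℝ} (hε : 0 < ε) :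
    ∀ᶠ x in atTop, μ (Ioi (x - H)) ≤ ENNReal.ofReal (1 + ε) * μ (Ioi x) := by
  filter_upwards [(hsub.tendsto_mtail_sub_div_mtail hH).eventually
    (eventually_le_nhds (by linarith : (1 : ℝ) < 1 + ε))] with x hx
  rw [div_le_iff₀ (hsub.2.1 x)] at hx
  rw [measure_Ioi_eq_ofReal_mtail, measure_Ioi_eq_ofReal_mtail, ← ENNReal.ofReal_mul (by linarith)]
  exact ENNReal.ofReal_le_ofReal hx

lemma eventually_lintegral_Ioc_le {ε : ℝ} (hε : 0 < ε) :
    ∀ᶠ H in atTop, ∀ᶠ x in atTop,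
      ∫⁻ u in Ioc H (x - H), μ (Ioi (x - u)) ∂μ ≤ ENNReal.ofReal ε * μ (Ioi x) := by
  filter_upwards [eventually_ge_atTop 0,
    (tendsto_mtail_atTop μ).eventually (eventually_le_nhds (half_pos hε))] with H hH hφ
  filter_upwards [eventually_ge_atTop H, hsub.tendsto_lintegral_div_mtail.eventually
    (eventually_le_nhds (by linarith : (1 : ℝ) < 1 + ε / 2))] with x hHx hI
  have hm := hsub.2.1 x
  rw [div_le_iff₀ hm] at hI
  have hJ : (∫⁻ u in Ioc H x, μ (Ioi (x - u)) ∂μ).toReal ≤ ε * mtail μ x := by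
    nlinarith [mtail_mul_add_le hsub.1 hH hHx]
  calc ∫⁻ u in Ioc H (x - H), μ (Ioi (x - u)) ∂μ
      ≤ ∫⁻ u in Ioc H x, μ (Ioi (x - u)) ∂μ :=
        lintegral_mono_set (Ioc_subset_Ioc_right (by linarith))
    _ = ENNReal.ofReal (∫⁻ u in Ioc H x, μ (Ioi (x - u)) ∂μ).toReal :=
        (ENNReal.ofReal_toReal (lintegral_measure_Ioi_sub_ne_top μ _ x)).symm
    _ ≤ ENNReal.ofReal ε * μ (Ioi x) := by
        rw [measure_Ioi_eq_ofReal_mtail, ← ENNReal.ofReal_mul hε.le]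
        exact ENNReal.ofReal_le_ofReal hJ

lemma eventually_measure_Ioi_sub_div_le {a b h : ℝ} (ha : 0 < a) (hab : a ≤ b) (hh : 0 ≤ h)
    {ε : ℝ} (hε : 0 < ε) :
    ∀ᶠ x in atTop, ∀ c ∈ Icc a b,
      μ (Ioi ((x - h) / c)) ≤ ENNReal.ofReal (1 + ε) * μ (Ioi (x / c)) := by
  obtain ⟨Z, hZ⟩ :=
    (hsub.eventually_measure_Ioi_sub_le (div_nonneg hh ha.le) hε).exists_forall_of_atTop
  have hb : 0 < b := ha.trans_le hab
  filter_upwards [eventually_ge_atTop 0, eventually_ge_atTop (b * Z)] with x hx hxZ c hc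
  have hc0 : 0 < c := ha.trans_le hc.1
  refine le_trans (antitone_measure_Ioi μ ?_) (hZ _ ?_)
  · rw [sub_div]
    gcongr
    exact hc.1
  · calc Z ≤ x / b := by rwa [le_div_iff₀ hb, mul_comm]
      _ ≤ x / c := div_le_div_of_nonneg_left hx hc0 hc.2

lemma eventually_lintegral_Ioc_div_le {b : ℝ} (hb : 0 < b) {ε : ℝ} (hε : 0 < ε) :
    ∀ᶠ h in atTop, ∀ᶠ x in atTop, ∀ c ∈ Ioc 0 b, ∀ d ∈ Ioc 0 b,
      ∫⁻ t in Ioc (h / d) ((x - h) / d), μ (Ioi ((x - d * t) / c)) ∂μ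
        ≤ ENNReal.ofReal ε * (μ (Ioi (x / c)) + μ (Ioi (x / d))) := by
  have hε' : 0 < ε / 3 := by positivity
  have hsmall := (tendsto_mtail_atTop μ).eventually (eventually_le_nhds hε')
  filter_upwards [(tendsto_id.atTop_div_const hb).eventually
    ((hsub.eventually_lintegral_Ioc_le hε').and hsmall), eventually_ge_atTop 0]
    with h ⟨hmid, hφ⟩ hh
  obtain ⟨Y, hY⟩ := (hmid.and (hsub.eventually_measure_Ioi_sub_le
    (div_nonneg hh hb.le) one_pos)).exists_forall_of_atTop
  filter_upwards [eventually_ge_atTop (b * Y), eventually_ge_atTop 0] with x hxY hx c hc d hd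
  set y := x / max c d
  obtain ⟨hmidy, hlong⟩ := hY y (by
    calc Y ≤ x / b := by rwa [le_div_iff₀ hb, mul_comm]
      _ ≤ y := div_le_div_of_nonneg_left hx (lt_max_of_lt_left hc.1) (max_le hc.2 hd.2))
  have hrange : ∀ t ∈ Ioc (h / d) ((x - h) / d), h / b < t ∧ h ≤ x - d * t := fun t ht =>
    ⟨(div_le_div_of_nonneg_left hh hd.1 hd.2).trans_lt ht.1,
      by linarith [(le_div_iff₀' hd.1).mp ht.2]⟩
  set D := Ioc (h / d) ((x - h) / d)
  -- below `y - h / b` the integrand is at most `F̄(y - t)`; above it, at most `F̄(h / b)`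
  have hlow : ∫⁻ t in D ∩ Iic (y - h / b), μ (Ioi ((x - d * t) / c)) ∂μ
      ≤ ENNReal.ofReal (ε / 3) * μ (Ioi y) := by
    have hD : D ∩ Iic (y - h / b) ⊆ Ioc (h / b) (y - h / b) := fun t ht =>
      ⟨(hrange t ht.1).1, ht.2⟩
    refine le_trans (setLIntegral_mono (measurable_measure_Ioi_sub μ y) fun t ht => ?_)
      ((lintegral_mono_set hD).trans hmidy)
    obtain ⟨hbt, hht⟩ := hrange t ht.1
    exact antitone_measure_Ioi μ (div_max_sub_le_sub_mul_div hc.1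
      ((div_nonneg hh hb.le).trans hbt.le) (by linarith))
  have hhigh : ∫⁻ t in D ∩ Ioi (y - h / b), μ (Ioi ((x - d * t) / c)) ∂μ
      ≤ ENNReal.ofReal (ε / 3) * (2 * μ (Ioi y)) := by
    calc ∫⁻ t in D ∩ Ioi (y - h / b), μ (Ioi ((x - d * t) / c)) ∂μ
        ≤ ∫⁻ _ in D ∩ Ioi (y - h / b), μ (Ioi (h / b)) ∂μ :=
          setLIntegral_mono measurable_const fun t ht => antitone_measure_Ioi μ
            ((div_le_div_of_nonneg_left hh hc.1 hc.2).trans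
              (div_le_div_of_nonneg_right (hrange t ht.1).2 hc.1.le))
      _ = μ (Ioi (h / b)) * μ (D ∩ Ioi (y - h / b)) := setLIntegral_const _ _
      _ ≤ ENNReal.ofReal (ε / 3) * (2 * μ (Ioi y)) := by
          gcongr
          · rwa [measure_Ioi_eq_ofReal_mtail, ENNReal.ofReal_le_ofReal_iff hε'.le]
          · refine (measure_mono inter_subset_right).trans (hlong.trans_eq ?_)
            norm_num
  calc ∫⁻ t in D, μ (Ioi ((x - d * t) / c)) ∂μ
      ≤ ∫⁻ t in D ∩ Iic (y - h / b), μ (Ioi ((x - d * t) / c)) ∂μ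
        + ∫⁻ t in D ∩ Ioi (y - h / b), μ (Ioi ((x - d * t) / c)) ∂μ := by
        rw [← lintegral_union (measurableSet_Ioc.inter measurableSet_Ioi)
          (disjoint_left.mpr fun t h1 h2 => not_lt.mpr h1.2 h2.2), ← inter_union_distrib_left,
          Iic_union_Ioi, inter_univ]
    _ ≤ ENNReal.ofReal (ε / 3) * μ (Ioi y) + ENNReal.ofReal (ε / 3) * (2 * μ (Ioi y)) :=
        add_le_add hlow hhigh
    _ = ENNReal.ofReal (3 * (ε / 3)) * μ (Ioi y) := by
        rw [ENNReal.ofReal_mul (by norm_num), ENNReal.ofReal_ofNat]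
        ring
    _ ≤ ENNReal.ofReal ε * (μ (Ioi (x / c)) + μ (Ioi (x / d))) := by
        rw [mul_div_cancel₀ ε three_ne_zero]
        gcongr
        exact measure_Ioi_div_max_le μ x c d

end Subexp

lemma exists_pos_ofReal_mul_add_mul_le {ε : ℝ} (hε : 0 < ε) (k : ℕ) :
    ∃ δ > 0, ENNReal.ofReal (1 + δ) * ENNReal.ofReal (1 + δ)
      + ENNReal.ofReal (1 + δ) * ENNReal.ofReal δ * k ≤ ENNReal.ofReal (1 + ε) := by
  set δ := min 1 (ε / (3 + 2 * k))
  have hδ : 0 < δ := lt_min one_pos (by positivity)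
  have h1 : δ ≤ 1 := min_le_left _ _
  have h2 : δ * (3 + 2 * k) ≤ ε := (le_div_iff₀ (by positivity)).mp (min_le_right _ _)
  refine ⟨δ, hδ, ?_⟩
  rw [← ENNReal.ofReal_mul (by positivity), ← ENNReal.ofReal_mul (by positivity),
    ← ENNReal.ofReal_natCast, ← ENNReal.ofReal_mul (by positivity),
    ← ENNReal.ofReal_add (by positivity) (by positivity)]
  refine ENNReal.ofReal_le_ofReal ?_
  nlinarith [mul_le_mul_of_nonneg_left h1 hδ.le,
    mul_nonneg (mul_nonneg hδ.le (sub_nonneg.mpr h1)) k.cast_nonneg]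

section Independence

variable {Ω : Type*} [MeasurableSpace Ω] {P : Measure Ω}

lemma measure_lt_add_le (U V : Ω → ℝ) (x h : ℝ) :
    P {ω | x < U ω + V ω} ≤ P {ω | x - h < V ω} + P {ω | x - h < U ω}
      + P {ω | x < U ω + V ω ∧ V ω ∈ Ioc h (x - h)} := by
  refine (measure_mono fun ω (hω : x < U ω + V ω) => ?_).trans
    ((measure_union_le _ _).trans (add_le_add_left (measure_union_le _ _) _))
  by_cases hV : x - h < V ω
  · exact Or.inl (Or.inl hV)
  by_cases hU : x - h < U ω
  · exact Or.inl (Or.inr hU)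
  exact Or.inr ⟨hω, by linarith, not_lt.mp hV⟩

lemma measure_lt_const_mul {μ : Measure ℝ} {X : Ω → ℝ} (hX : Measurable X) (hlaw : P.map X = μ)
    {c : ℝ} (hc : 0 < c) (x : ℝ) : P {ω | x < c * X ω} = μ (Ioi (x / c)) := by
  rw [← hlaw, Measure.map_apply hX measurableSet_Ioi]
  congr 1
  ext ω
  simp [div_lt_iff₀' hc]

lemma ProbabilityTheory.IndepFun.measure_lt_add_and_mem [IsFiniteMeasure P] {U V : Ω → ℝ}
    (hU : Measurable U) (hV : Measurable V) (hUV : IndepFun U V P) (x : ℝ) {A : Set ℝ}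
    (hA : MeasurableSet A) :
    P {ω | x < U ω + V ω ∧ V ω ∈ A} = ∫⁻ v in A, P {ω | x - v < U ω} ∂(P.map V) := by
  set T : Set (ℝ × ℝ) := {p | x < p.2 + p.1 ∧ p.1 ∈ A}
  have hT : MeasurableSet T :=
    (measurableSet_lt measurable_const (measurable_snd.add measurable_fst)).inter
      (measurable_fst hA)
  rw [show {ω | x < U ω + V ω ∧ V ω ∈ A} = (fun ω => (V ω, U ω)) ⁻¹' T from rfl,
    ← Measure.map_apply (hV.prodMk hU) hT,
    (indepFun_iff_map_prod_eq_prod_map_map hV.aemeasurable hU.aemeasurable).mp hUV.symm,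
    Measure.prod_apply hT, ← lintegral_indicator hA]
  refine lintegral_congr fun v => ?_
  by_cases hv : v ∈ A
  · rw [indicator_of_mem hv, Measure.map_apply hU (measurable_prodMk_left hT)]
    congr 1
    ext u
    simp [T, hv, sub_lt_iff_lt_add]
  · rw [indicator_of_notMem hv]
    convert measure_empty (μ := P.map U)
    ext u
    simp [T, hv]

lemma measure_lt_add_mul_and_mem_le [IsFiniteMeasure P] {μ : Measure ℝ} {U Y : Ω → ℝ}
    (hU : Measurable U) (hY : Measurable Y) (hlaw : P.map Y = μ) {d : ℝ} (hd : 0 < d)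
    (hUY : IndepFun U (fun ω => d * Y ω) P) {h : ℝ} {g : ℝ → ℝ≥0∞}
    (hg : ∀ y, h ≤ y → P {ω | y < U ω} ≤ g y) (x : ℝ) :
    P {ω | x < U ω + d * Y ω ∧ d * Y ω ∈ Ioc h (x - h)}
      ≤ ∫⁻ t in Ioc (h / d) ((x - h) / d), g (x - d * t) ∂μ := by
  have hmono : Measurable fun v => P {ω | x - v < U ω} :=
    Monotone.measurable fun v v' hvv' => measure_mono fun ω (hω : x - v < U ω) =>
      show x - v' < U ω by linarith
  rw [hUY.measure_lt_add_and_mem hU (hY.const_mul d) x measurableSet_Ioc,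
    show (fun ω => d * Y ω) = (d * ·) ∘ Y from rfl, ← Measure.map_map (measurable_const_mul d) hY,
    hlaw,
    setLIntegral_map measurableSet_Ioc hmono (measurable_const_mul d),
    preimage_const_mul_Ioc₀ _ _ hd]
  refine setLIntegral_mono' measurableSet_Ioc fun t ht => hg _ ?_
  linarith [(le_div_iff₀' hd).mp ht.2]

lemma measure_lt_add_mul_and_mem_le_card_mul [IsFiniteMeasure P] {ι : Type*} {μ : Measure ℝ}
    {U Y : Ω → ℝ} (hU : Measurable U) (hY : Measurable Y) (hlaw : P.map Y = μ) {d : ℝ}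
    (hd : 0 < d) (hUY : IndepFun U (fun ω => d * Y ω) P) {s : Finset ι} {c : ι → ℝ}
    (hc : ∀ i ∈ s, 0 < c i) {h x : ℝ} {K η : ℝ≥0∞} (hK : K ≠ ⊤)
    (hUtail : ∀ y, h ≤ y → P {ω | y < U ω} ≤ K * ∑ i ∈ s, μ (Ioi (y / c i)))
    (hint : ∀ i ∈ s, ∫⁻ t in Ioc (h / d) ((x - h) / d), μ (Ioi ((x - d * t) / c i)) ∂μ ≤ η) :
    P {ω | x < U ω + d * Y ω ∧ d * Y ω ∈ Ioc h (x - h)} ≤ K * (s.card * η) := by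
  have hψ : ∀ i ∈ s, Measurable fun t => μ (Ioi ((x - d * t) / c i)) := fun i hi =>
    ((antitone_measure_Ioi μ).comp fun t t' htt' =>
      div_le_div_of_nonneg_right (by nlinarith) (hc i hi).le).measurable
  calc P {ω | x < U ω + d * Y ω ∧ d * Y ω ∈ Ioc h (x - h)}
      ≤ ∫⁻ t in Ioc (h / d) ((x - h) / d), K * ∑ i ∈ s, μ (Ioi ((x - d * t) / c i)) ∂μ :=
        measure_lt_add_mul_and_mem_le hU hY hlaw hd hUY hUtail x
    _ = K * ∑ i ∈ s, ∫⁻ t in Ioc (h / d) ((x - h) / d), μ (Ioi ((x - d * t) / c i)) ∂μ := by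
        rw [lintegral_const_mul' _ _ hK,
          lintegral_finsetSum' s fun i hi => (hψ i hi).aemeasurable]
    _ ≤ K * ∑ _i ∈ s, η := by gcongr with i hi; exact hint i hi
    _ = K * (s.card * η) := by rw [Finset.sum_const, nsmul_eq_mul]

lemma ProbabilityTheory.iIndepFun.indepFun_sum_mul_of_notMem {ι : Type*} {X : ι → Ω → ℝ}
    (hXiid : iIndepFun X P) (hXm : ∀ i, Measurable (X i)) (c : ι → ℝ) {s : Finset ι} {j : ι}
    (hj : j ∉ s) :
    IndepFun (fun ω => ∑ i ∈ s, c i * X i ω) (fun ω => c j * X j ω) P := by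
  have hsum : (fun ω => ∑ i ∈ s, c i * X i ω) = ∑ i ∈ s, (c i * ·) ∘ X i := by
    ext ω
    simp [Finset.sum_apply]
  rw [hsum]
  exact (hXiid.comp (fun i => (c i * ·)) fun i => measurable_const_mul (c i))
    |>.indepFun_finsetSum_of_notMem (fun i => (hXm i).const_mul (c i)) hj

end Independence

namespace Subexp

variable {Ω ι : Type*} [MeasurableSpace Ω] {P : Measure Ω} [IsProbabilityMeasure P]
  {μ : Measure ℝ} [IsProbabilityMeasure μ] {X : ι → Ω → ℝ} {a b : ℝ}

lemma eventually_measure_lt_sum_insert_le (hsub : Subexp μ) (hXm : ∀ i, Measurable (X i))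
    (hXlaw : ∀ i, P.map (X i) = μ) (hXiid : iIndepFun X P) (ha : 0 < a) (hab : a ≤ b)
    [DecidableEq ι] {s : Finset ι} {j : ι} (hj : j ∉ s)
    (ih : ∀ ε > 0, ∀ᶠ x in atTop, ∀ c : ι → ℝ, (∀ i, c i ∈ Icc a b) →
      P {ω | x < ∑ i ∈ s, c i * X i ω} ≤ ENNReal.ofReal (1 + ε) * ∑ i ∈ s, μ (Ioi (x / c i)))
    {ε : ℝ} (hε : 0 < ε) :
    ∀ᶠ x in atTop, ∀ c : ι → ℝ, (∀ i, c i ∈ Icc a b) →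
      P {ω | x < ∑ i ∈ insert j s, c i * X i ω}
        ≤ ENNReal.ofReal (1 + ε) * ∑ i ∈ insert j s, μ (Ioi (x / c i)) := by
  obtain ⟨δ, hδ, hδε⟩ := exists_pos_ofReal_mul_add_mul_le hε s.card
  obtain ⟨Y, hY⟩ := (ih δ hδ).exists_forall_of_atTop
  obtain ⟨h, ⟨hmid, hhY⟩, hh⟩ := (((hsub.eventually_lintegral_Ioc_div_le
    (ha.trans_le hab) hδ).and (eventually_ge_atTop Y)).and (eventually_ge_atTop 0)).exists
  filter_upwards [hmid, hsub.eventually_measure_Ioi_sub_div_le ha hab hh hδ,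
    eventually_ge_atTop (Y + h)] with x hmidx hshift hxY c hc
  have hc0 : ∀ i, 0 < c i := fun i => ha.trans_le (hc i).1
  set p := ENNReal.ofReal (1 + δ)
  set U : Ω → ℝ := fun ω => ∑ i ∈ s, c i * X i ω
  set A := μ (Ioi (x / c j))
  set B := ∑ i ∈ s, μ (Ioi (x / c i))
  have hp : p ≤ p * p := le_mul_of_one_le_left' (ENNReal.one_le_ofReal.mpr (by linarith))
  have hT1 : P {ω | x - h < c j * X j ω} ≤ p * p * A :=
    (measure_lt_const_mul (hXm j) (hXlaw j) (hc0 j) _).trans_le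
      ((hshift _ (hc j)).trans (mul_le_mul_left hp A))
  have hT2 : P {ω | x - h < U ω} ≤ p * p * B := by
    calc P {ω | x - h < U ω} ≤ p * ∑ i ∈ s, μ (Ioi ((x - h) / c i)) := hY _ (by linarith) c hc
      _ ≤ p * ∑ i ∈ s, p * μ (Ioi (x / c i)) := by
          gcongr with i
          exact hshift _ (hc i)
      _ = p * p * B := by rw [← Finset.mul_sum, mul_assoc]
  have hT3 : P {ω | x < U ω + c j * X j ω ∧ c j * X j ω ∈ Ioc h (x - h)}
      ≤ p * (s.card * (ENNReal.ofReal δ * (A + B))) := by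
    refine measure_lt_add_mul_and_mem_le_card_mul
      (Finset.measurable_sum s fun i _ => (hXm i).const_mul _) (hXm j) (hXlaw j) (hc0 j)
      (hXiid.indepFun_sum_mul_of_notMem hXm c hj)
      (fun i _ => hc0 i) ENNReal.ofReal_ne_top (fun y hy => hY y (hhY.trans hy) c hc)
      fun i hi => (hmidx _ ⟨hc0 i, (hc i).2⟩ _ ⟨hc0 j, (hc j).2⟩).trans ?_
    rw [add_comm]
    gcongr
    exact Finset.single_le_sum (f := fun i => μ (Ioi (x / c i))) (fun _ _ => zero_le) hi
  calc P {ω | x < ∑ i ∈ insert j s, c i * X i ω}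
      = P {ω | x < U ω + c j * X j ω} := by simp only [Finset.sum_insert hj, add_comm, U]
    _ ≤ p * p * A + p * p * B + p * (s.card * (ENNReal.ofReal δ * (A + B))) :=
        (measure_lt_add_le _ _ x h).trans (by gcongr)
    _ = (p * p + p * ENNReal.ofReal δ * s.card) * (A + B) := by ring
    _ ≤ ENNReal.ofReal (1 + ε) * ∑ i ∈ insert j s, μ (Ioi (x / c i)) := by
        rw [Finset.sum_insert hj]
        gcongr

lemma eventually_measure_lt_sum_le (hsub : Subexp μ) (hXm : ∀ i, Measurable (X i))
    (hXlaw : ∀ i, P.map (X i) = μ) (hXiid : iIndepFun X P) (ha : 0 < a) (hab : a ≤ b)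
    (s : Finset ι) {ε : ℝ} (hε : 0 < ε) :
    ∀ᶠ x in atTop, ∀ c : ι → ℝ, (∀ i, c i ∈ Icc a b) →
      P {ω | x < ∑ i ∈ s, c i * X i ω} ≤ ENNReal.ofReal (1 + ε) * ∑ i ∈ s, μ (Ioi (x / c i)) := by
  classical
  induction s using Finset.induction_on generalizing ε with
  | empty =>
    filter_upwards [eventually_ge_atTop 0] with x hx c _
    simp [not_lt.mpr hx]
  | insert j s hj ih =>
    exact hsub.eventually_measure_lt_sum_insert_le hXm hXlaw hXiid ha hab hj
      (fun ε hε => ih hε) hε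

end Subexp

lemma prod_one_sub_le_one_sub_sum_add_sq {ι : Type*} (s : Finset ι) {q : ι → ℝ}
    (hq0 : ∀ i ∈ s, 0 ≤ q i) (hq1 : ∀ i ∈ s, q i ≤ 1) :
    ∏ i ∈ s, (1 - q i) ≤ 1 - ∑ i ∈ s, q i + (∑ i ∈ s, q i) ^ 2 := by
  classical
  induction s using Finset.induction_on with
  | empty => simp
  | insert j s hj ih =>
    rw [Finset.prod_insert hj, Finset.sum_insert hj]
    have hS : 0 ≤ ∑ i ∈ s, q i := Finset.sum_nonneg fun i hi => hq0 i (Finset.mem_insert_of_mem hi)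
    have hj0 := hq0 j (Finset.mem_insert_self j s)
    have hj1 := hq1 j (Finset.mem_insert_self j s)
    calc (1 - q j) * ∏ i ∈ s, (1 - q i)
        ≤ (1 - q j) * (1 - ∑ i ∈ s, q i + (∑ i ∈ s, q i) ^ 2) :=
          mul_le_mul_of_nonneg_left
            (ih (fun i hi => hq0 i (Finset.mem_insert_of_mem hi))
              fun i hi => hq1 i (Finset.mem_insert_of_mem hi))
            (sub_nonneg.mpr hj1)
      _ ≤ 1 - (q j + ∑ i ∈ s, q i) + (q j + ∑ i ∈ s, q i) ^ 2 := by
          nlinarith [mul_nonneg hj0 hS, mul_nonneg hj0 (sq_nonneg (∑ i ∈ s, q i))]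

section LowerBound

variable {Ω ι : Type*} [MeasurableSpace Ω] {P : Measure Ω} {μ : Measure ℝ} {X : ι → Ω → ℝ}
  [Fintype ι]

lemma measure_sum_mul_le_le_prod (hXm : ∀ i, Measurable (X i)) (hXlaw : ∀ i, P.map (X i) = μ)
    (hXiid : iIndepFun X P) (h0 : μ (Iic 0) = 0) {c : ι → ℝ} (hc : ∀ i, 0 < c i) (x : ℝ) :
    P {ω | ∑ i, c i * X i ω ≤ x} ≤ ∏ i, μ (Iic (x / c i)) := by
  have hpos : ∀ᵐ ω ∂P, ∀ i, 0 < X i ω := ae_all_iff.mpr fun i =>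
    ae_of_ae_map (hXm i).aemeasurable (by rw [hXlaw i]; exact ae_pos_of_measure_Iic_eq_zero h0)
  calc P {ω | ∑ i, c i * X i ω ≤ x}
      ≤ P (⋂ i ∈ Finset.univ, X i ⁻¹' Iic (x / c i)) := by
        refine measure_mono_ae (hpos.mono fun ω hω (hsum : ∑ i, c i * X i ω ≤ x) => ?_)
        refine mem_iInter₂.mpr fun i _ => ?_
        rw [mem_preimage, mem_Iic, le_div_iff₀' (hc i)]
        exact (Finset.single_le_sum (fun k _ => (mul_pos (hc k) (hω k)).le)
          (Finset.mem_univ i)).trans hsum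
    _ = ∏ i, μ (Iic (x / c i)) := by
        rw [hXiid.measure_inter_preimage_eq_mul _ fun _ _ => measurableSet_Iic]
        refine Finset.prod_congr rfl fun i _ => ?_
        rw [← hXlaw i, Measure.map_apply (hXm i) measurableSet_Iic]

lemma eventually_sum_mtail_le_measure_lt_sum [IsProbabilityMeasure P] [IsProbabilityMeasure μ]
    (hXm : ∀ i, Measurable (X i))
    (hXlaw : ∀ i, P.map (X i) = μ) (hXiid : iIndepFun X P) (h0 : μ (Iic 0) = 0) {a b : ℝ}
    (ha : 0 < a) (hab : a ≤ b) {ε : ℝ} (hε : 0 < ε) :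
    ∀ᶠ x in atTop, ∀ c : ι → ℝ, (∀ i, c i ∈ Icc a b) →
      (1 - ε) * ∑ i, mtail μ (x / c i) ≤ (P {ω | x < ∑ i, c i * X i ω}).toReal := by
  have hb : 0 < b := ha.trans_le hab
  have hsmall : ∀ᶠ x in atTop, Fintype.card ι * mtail μ (x / b) ≤ ε :=
    (((tendsto_mtail_atTop μ).comp (tendsto_id.atTop_div_const hb)).const_mul _).eventually
      (eventually_le_nhds (by simpa using hε))
  filter_upwards [hsmall, eventually_ge_atTop 0] with x hx hx0 c hc
  have hc0 : ∀ i, 0 < c i := fun i => ha.trans_le (hc i).1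
  set S := ∑ i, mtail μ (x / c i)
  have hS0 : 0 ≤ S := Finset.sum_nonneg fun i _ => ENNReal.toReal_nonneg
  have hSε : S ≤ ε := by
    calc S ≤ Finset.univ.card • mtail μ (x / b) :=
          Finset.sum_le_card_nsmul _ _ _ fun i _ => ENNReal.toReal_mono (measure_ne_top μ _)
            (antitone_measure_Ioi μ (div_le_div_of_nonneg_left hx0 (hc0 i) (hc i).2))
      _ ≤ ε := by rwa [Finset.card_univ, nsmul_eq_mul]
  have hprod : (P {ω | ∑ i, c i * X i ω ≤ x}).toReal ≤ ∏ i, (1 - mtail μ (x / c i)) := by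
    refine (ENNReal.toReal_mono (ENNReal.prod_ne_top fun i _ => measure_ne_top μ _)
      (measure_sum_mul_le_le_prod hXm hXlaw hXiid h0 hc0 x)).trans_eq ?_
    rw [ENNReal.toReal_prod]
    exact Finset.prod_congr rfl fun i _ => toReal_measure_Iic μ _
  have hcompl : (P {ω | x < ∑ i, c i * X i ω}).toReal
      = 1 - (P {ω | ∑ i, c i * X i ω ≤ x}).toReal := by
    have hmeas : MeasurableSet {ω | ∑ i, c i * X i ω ≤ x} :=
      measurableSet_le (Finset.measurable_sum _ fun i _ => (hXm i).const_mul _) measurable_const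
    rw [show {ω | x < ∑ i, c i * X i ω} = {ω | ∑ i, c i * X i ω ≤ x}ᶜ by ext; simp,
      prob_compl_eq_one_sub hmeas, ENNReal.toReal_sub_of_le prob_le_one ENNReal.one_ne_top,
      ENNReal.toReal_one]
  have := prod_one_sub_le_one_sub_sum_add_sq Finset.univ (q := fun i => mtail μ (x / c i))
    (fun i _ => ENNReal.toReal_nonneg) fun i _ => by
      simpa [mtail] using ENNReal.toReal_mono ENNReal.one_ne_top prob_le_one
  nlinarith

end LowerBound

/-- Tang–Tsitsiashvili (2003), Proposition 5.1: for i.i.d. subexponential `X₁,…,Xₙ` and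
`0 < a ≤ b < ∞`, `P(Σ cᵢXᵢ > x) ∼ Σ P(cᵢXᵢ > x)` uniformly in `(c₁,…,cₙ) ∈ [a,b]ⁿ`. -/
theorem weighted_sum_uniform_asymptotics {Ω : Type*} [MeasurableSpace Ω]
    (P : Measure Ω) [IsProbabilityMeasure P] (n : ℕ) (hn : 1 ≤ n)
    (X : Fin n → Ω → ℝ) (μ : Measure ℝ) [IsProbabilityMeasure μ]
    (hXm : ∀ i, Measurable (X i)) (hXlaw : ∀ i, P.map (X i) = μ)
    (hXiid : iIndepFun X P)
    (hsub : Subexp μ) (a b : ℝ) (ha : 0 < a) (hab : a ≤ b) :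
    TendstoUniformlyOn
      (fun x (c : Fin n → ℝ) =>
        (P {ω | x < ∑ i, c i * X i ω}).toReal / ∑ i, (P {ω | x < c i * X i ω}).toReal)
      (fun _ => 1) atTop {c : Fin n → ℝ | ∀ i, c i ∈ Set.Icc a b} := by
  have : Nonempty (Fin n) := ⟨⟨0, hn⟩⟩
  rw [Metric.tendstoUniformlyOn_iff]
  intro ε hε
  filter_upwards [hsub.eventually_measure_lt_sum_le hXm hXlaw hXiid ha hab _ (half_pos hε),
    eventually_sum_mtail_le_measure_lt_sum hXm hXlaw hXiid hsub.1 ha hab (half_pos hε)]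
    with x hupper hlower c hc
  have hden : ∑ i, (P {ω | x < c i * X i ω}).toReal = ∑ i, mtail μ (x / c i) :=
    Finset.sum_congr rfl fun i _ => by
      rw [measure_lt_const_mul (hXm i) (hXlaw i) (ha.trans_le (hc i).1), mtail]
  have hS : 0 < ∑ i, mtail μ (x / c i) :=
    Finset.sum_pos (fun i _ => hsub.2.1 _) Finset.univ_nonempty
  have hupper' : (P {ω | x < ∑ i, c i * X i ω}).toReal ≤ (1 + ε / 2) * ∑ i, mtail μ (x / c i) := by
    have := ENNReal.toReal_mono (ENNReal.mul_ne_top ENNReal.ofReal_ne_top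
      (ENNReal.sum_ne_top.mpr fun _ _ => measure_ne_top _ _)) (hupper c hc)
    rwa [ENNReal.toReal_mul, ENNReal.toReal_ofReal (by positivity),
      ENNReal.toReal_sum fun _ _ => measure_ne_top _ _] at this
  have h1 := (le_div_iff₀ hS).mpr (hlower c hc)
  have h2 := (div_le_iff₀ hS).mpr hupper'
  rw [hden, Real.dist_eq, abs_lt]
  constructor <;> linarith
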